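/- Let H and H' be source-terminal graphs with disjoint edge sets. Then for the parallel join G = H ⋆ H' (identifying sources and identifying terminals) one has Ψ_G = Ψ_H·Φ_{H'} + Φ_H·Ψ_{H'} and Φ_G = Φ_H·Φ_{H'}, where Φ_X denotes the Kirchhoff polynomial of X with source and terminal identified. -/

import Mathlib

/-- A multigraph: each edge `e` has endpoints `fst e` and `snd e`. -/
structure Multigraph (V : Type) (E : Type) where
  fst : E → V
  snd : E → V

namespace Multigraph

variable {V E V' E' W : Type}

/-- Adjacency using only edges in the set `S`. -/
def Adj (G : Multigraph V E) (S : Set E) (u v : V) : Prop :=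
  ∃ e ∈ S, (G.fst e = u ∧ G.snd e = v) ∨ (G.fst e = v ∧ G.snd e = u)

/-- All vertices are connected using edges from `S`. -/
def ConnOn (G : Multigraph V E) (S : Set E) : Prop :=
  ∀ u v : V, Relation.ReflTransGen (G.Adj S) u v

/-- The multigraph is connected. -/
def ConnectedGraph (G : Multigraph V E) : Prop := G.ConnOn Set.univ

/-- A spanning tree: a minimally spanning-connected edge set. -/
def IsSpanningTree (G : Multigraph V E) [DecidableEq E] (T : Finset E) : Prop :=
  G.ConnOn ↑T ∧ ∀ e ∈ T, ¬ G.ConnOn ↑(T.erase e)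

open Classical in
/-- The Kirchhoff polynomial `Ψ_G = ∑_{T spanning tree} ∏_{e ∉ T} t_e`. -/
noncomputable def kirchhoff (G : Multigraph V E) [Fintype E] [DecidableEq E] :
    MvPolynomial E ℚ :=
  ∑ T : Finset E, if G.IsSpanningTree T then ∏ e ∈ Tᶜ, MvPolynomial.X e else 0

/-- Deletion of the edge `e`. -/
def delete (G : Multigraph V E) (e : E) : Multigraph V {e' : E // e' ≠ e} :=
  ⟨fun e' => G.fst e'.1, fun e' => G.snd e'.1⟩

/-- Contraction of the edge `e` (its two endpoints get identified). -/
def contract (G : Multigraph V E) (e : E) :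
    Multigraph (Quot fun a b : V => a = G.fst e ∧ b = G.snd e) {e' : E // e' ≠ e} :=
  ⟨fun e' => Quot.mk _ (G.fst e'.1), fun e' => Quot.mk _ (G.snd e'.1)⟩

/-- Identify the two vertices `a` and `b`. -/
def identify (G : Multigraph V E) (a b : V) :
    Multigraph (Quot fun x y : V => x = a ∧ y = b) E :=
  ⟨fun e => Quot.mk _ (G.fst e), fun e => Quot.mk _ (G.snd e)⟩

/-- A self-loop. -/
def IsLoop (G : Multigraph V E) (e : E) : Prop := G.fst e = G.snd e

/-- A bridge: deleting `e` disconnects the graph. -/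
def IsBridge (G : Multigraph V E) (e : E) : Prop := ¬ G.ConnOn {e' | e' ≠ e}

/-- The whole graph is a tree (its full edge set is a spanning tree). -/
def IsTreeGraph (G : Multigraph V E) [Fintype E] [DecidableEq E] : Prop := G.IsSpanningTree Finset.univ

/-- A regular edge: not a bridge, not a self-loop, and deleting it does not leave a tree. -/
def IsRegular (G : Multigraph V E) [Fintype E] [DecidableEq E] (e : E) : Prop :=
  ¬ G.IsBridge e ∧ ¬ G.IsLoop e ∧ ¬ (G.delete e).IsTreeGraph

/-- The Jacobian ideal of a polynomial: the ideal generated by its partial derivatives. -/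
noncomputable def jacobianIdeal {σ : Type} (f : MvPolynomial σ ℚ) :
    Ideal (MvPolynomial σ ℚ) :=
  Ideal.span (Set.range fun i : σ => MvPolynomial.pderiv i f)

/-- Aluffi's Condition 1 for the pair `(G, e)`: `Ψ_G` lies in the Jacobian ideal of `Ψ_{G∖e}`. -/
def Cond1 (G : Multigraph V E) [Fintype E] [DecidableEq E] (e : E) : Prop :=
  G.kirchhoff ∈
    jacobianIdeal (MvPolynomial.rename (Subtype.val : {e' : E // e' ≠ e} → E)
      (G.delete e).kirchhoff)

end Multigraph

namespace Multigraph

variable {V E V' E' : Type}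

/-- Parallel join of two source-terminal graphs: identify the two sources and
the two terminals. -/
def parallelJoin (H : Multigraph V E) (s t : V) (H' : Multigraph V' E') (s' t' : V') :
    Multigraph
      (Quot fun a b : V ⊕ V' =>
        (a = Sum.inl s ∧ b = Sum.inr s') ∨ (a = Sum.inl t ∧ b = Sum.inr t'))
      (E ⊕ E') :=
  ⟨fun e => Quot.mk _ (Sum.elim (fun a => (Sum.inl (H.fst a) : V ⊕ V'))
      (fun b => Sum.inr (H'.fst b)) e),
   fun e => Quot.mk _ (Sum.elim (fun a => (Sum.inl (H.snd a) : V ⊕ V'))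
      (fun b => Sum.inr (H'.snd b)) e)⟩

/-- The polynomial `Φ`: the Kirchhoff polynomial of the graph with source and
terminal identified (the second Symanzik polynomial). -/
noncomputable def breaker (H : Multigraph V E) [Fintype E] [DecidableEq E] (s t : V) :
    MvPolynomial E ℚ :=
  (H.identify s t).kirchhoff

end Multigraph


/-!
Spanning trees of `H ⋆ H'` are exactly the disjoint unions `T ⊔ T'` where either `T` is a spanning
tree of `H` and `T'` one of `H'/(s' = t')`, or `T` is one of `H/(s = t)` and `T'` one of `H'`. The
two cases exclude each other: for `s ≠ t`, a spanning tree of `H/(s = t)` never connects `H`.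
Likewise the spanning trees of `(H ⋆ H')/(s = t)` are the unions of spanning trees of `H/(s = t)`
and `H'/(s' = t')`. Since the monomial of `T ⊔ T'` is the product of those of `T` and `T'`, both
formulas follow.

A graph whose vertices are a quotient is connected iff the equivalence relation generated by
adjacency and the identified pairs is total; all connectivity arguments take place there.
-/

open Function Relation

namespace Relation

def pairRel {α : Type*} (a b : α) (x y : α) : Prop := x = a ∧ y = b

variable {α β : Type*} {r : α → α → Prop} {a b x y : α}

theorem EqvGen.map {s : β → β → Prop} (f : α → β) (h : ∀ x y, r x y → EqvGen s (f x) (f y))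
    (hxy : EqvGen r x y) : EqvGen s (f x) (f y) := by
  induction hxy with
  | rel x y hr => exact h x y hr
  | refl => exact .refl _
  | symm _ _ _ ih => exact .symm _ _ ih
  | trans _ _ _ _ _ ih₁ ih₂ => exact .trans _ _ _ ih₁ ih₂

theorem EqvGen.of_sup_pairRel (hab : EqvGen r a b) (h : EqvGen (r ⊔ pairRel a b) x y) :
    EqvGen r x y :=
  EqvGen.eqvGen_le (sup_le (fun _ _ => .rel _ _) fun _ _ ⟨hx, hy⟩ => hx ▸ hy ▸ hab) _ _ h

theorem eqvGen_sup_pairRel_iff :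
    EqvGen (r ⊔ pairRel a b) x y ↔
      EqvGen r x y ∨ (EqvGen r x a ∧ EqvGen r b y) ∨ (EqvGen r x b ∧ EqvGen r a y) := by
  have hs : ∀ {x y}, EqvGen r x y → EqvGen r y x := EqvGen.symm _ _
  have ht : ∀ {x y z}, EqvGen r x y → EqvGen r y z → EqvGen r x z := EqvGen.trans _ _ _
  constructor
  · intro h
    induction h with
    | rel x y h =>
      rcases h with h | ⟨rfl, rfl⟩
      · exact .inl (.rel _ _ h)
      · exact .inr (.inl ⟨.refl _, .refl _⟩)
    | refl => exact .inl (.refl _)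
    | symm x y _ ih => grind
    | trans x y z _ _ ih₁ ih₂ => grind
  · have hr : EqvGen r ≤ EqvGen (r ⊔ pairRel a b) := EqvGen.mono le_sup_left
    have hab : EqvGen (r ⊔ pairRel a b) a b := .rel _ _ (.inr ⟨rfl, rfl⟩)
    rintro (h | ⟨h₁, h₂⟩ | ⟨h₁, h₂⟩)
    · exact hr _ _ h
    · exact ((hr _ _ h₁).trans _ _ _ hab).trans _ _ _ (hr _ _ h₂)
    · exact ((hr _ _ h₁).trans _ _ _ (.symm _ _ hab)).trans _ _ _ (hr _ _ h₂)

end Relation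

theorem Quot.mk_mk_eq_mk_mk_iff {α : Type*} {r : α → α → Prop} {a b x y : α} :
    Quot.mk (pairRel (Quot.mk r a) (Quot.mk r b)) (Quot.mk r x) =
        Quot.mk (pairRel (Quot.mk r a) (Quot.mk r b)) (Quot.mk r y) ↔
      EqvGen (r ⊔ pairRel a b) x y := by
  constructor
  · let g : Quot (pairRel (Quot.mk r a) (Quot.mk r b)) → Quot (r ⊔ pairRel a b) :=
      Quot.lift (Quot.lift (Quot.mk _) fun _ _ h => Quot.sound (.inl h))
        fun _ _ ⟨hx, hy⟩ => hx ▸ hy ▸ Quot.sound (.inr ⟨rfl, rfl⟩)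
    exact fun h => Quot.eq.1 (congrArg g h)
  · refine fun h => Quot.eq.2 (EqvGen.map (Quot.mk r) ?_ h)
    rintro x y (h | h)
    · rw [Quot.sound h]; exact .refl _
    · exact .rel _ _ ⟨congrArg _ h.1, congrArg _ h.2⟩

theorem Finset.coe_toLeft {α β : Type*} (u : Finset (α ⊕ β)) :
    (↑u.toLeft : Set α) = Sum.inl ⁻¹' (↑u : Set (α ⊕ β)) :=
  Set.ext fun _ => Finset.mem_toLeft

theorem Finset.coe_toRight {α β : Type*} (u : Finset (α ⊕ β)) :
    (↑u.toRight : Set β) = Sum.inr ⁻¹' (↑u : Set (α ⊕ β)) :=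
  Set.ext fun _ => Finset.mem_toRight

theorem Finset.minimal_toLeft_and_toRight_iff {α β : Type*} {P : Finset α → Prop}
    {Q : Finset β → Prop} {u : Finset (α ⊕ β)} :
    Minimal (fun u : Finset (α ⊕ β) => P u.toLeft ∧ Q u.toRight) u ↔
      Minimal P u.toLeft ∧ Minimal Q u.toRight := by
  constructor
  · intro h
    refine ⟨⟨h.prop.1, fun s hs hsu => ?_⟩, ⟨h.prop.2, fun t ht htu => ?_⟩⟩
    · have := h.le_of_le (y := s.disjSum u.toRight) (by simpa using ⟨hs, h.prop.2⟩)
        (Finset.disjSum_subset.2 ⟨hsu, subset_rfl⟩)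
      exact (Finset.subset_disjSum.1 this).1
    · have := h.le_of_le (y := u.toLeft.disjSum t) (by simpa using ⟨h.prop.1, ht⟩)
        (Finset.disjSum_subset.2 ⟨subset_rfl, htu⟩)
      exact (Finset.subset_disjSum.1 this).2
  · rintro ⟨hP, hQ⟩
    refine ⟨⟨hP.prop, hQ.prop⟩, fun v hv hvu => ?_⟩
    rw [← Finset.toLeft_disjSum_toRight (u := u), Finset.disjSum_subset]
    exact ⟨hP.le_of_le hv.1 (Finset.toLeft_subset_toLeft hvu),
      hQ.le_of_le hv.2 (Finset.toRight_subset_toRight hvu)⟩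

theorem minimal_or_iff {α : Type*} [LE α] {P Q : α → Prop} {x : α}
    (hPQ : ∀ ⦃x y⦄, Minimal P x → y ≤ x → ¬ Q y) (hQP : ∀ ⦃x y⦄, Minimal Q x → y ≤ x → ¬ P y) :
    Minimal (fun x => P x ∨ Q x) x ↔ Minimal P x ∨ Minimal Q x := by
  refine ⟨Minimal.or, ?_⟩
  rintro (h | h)
  · exact ⟨.inl h.prop, fun y hy hyx => hy.elim (h.le_of_le · hyx) (absurd · (hPQ h hyx))⟩
  · exact ⟨.inr h.prop, fun y hy hyx => hy.elim (absurd · (hQP h hyx)) (h.le_of_le · hyx)⟩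

namespace Multigraph

section Quotients

variable {V W E : Type} {G : Multigraph V E} {S S' : Set E} {u v : V}

def map (f : V → W) (G : Multigraph V E) : Multigraph W E :=
  ⟨fun e => f (G.fst e), fun e => f (G.snd e)⟩

theorem Adj.symm (h : G.Adj S u v) : G.Adj S v u := by
  obtain ⟨e, he, h⟩ := h
  exact ⟨e, he, h.symm⟩

instance : Std.Symm (G.Adj S) := ⟨fun _ _ => Adj.symm⟩

theorem connOn_iff_eqvGen : G.ConnOn S ↔ ∀ u v, EqvGen (G.Adj S) u v := by
  rw [EqvGen.eqvGen_eq_reflTransGen]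
  rfl

theorem ConnOn.mono (hS : S ⊆ S') (h : G.ConnOn S) : G.ConnOn S' := fun u v =>
  ReflTransGen.mono (fun _ _ ⟨e, he, h⟩ => ⟨e, hS he, h⟩) _ _ (h u v)

theorem connOn_map_iff {f : V → W} (hf : Surjective f) {k : V → V → Prop}
    (hk : ∀ x y, f x = f y ↔ EqvGen k x y) :
    (G.map f).ConnOn S ↔ ∀ u v, EqvGen (G.Adj S ⊔ k) u v := by
  have hker : ∀ x y, f x = f y → EqvGen (G.Adj S ⊔ k) x y := fun x y h =>
    EqvGen.mono le_sup_right _ _ ((hk x y).1 h)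
  rw [connOn_iff_eqvGen]
  constructor
  · suffices ∀ p q, EqvGen ((G.map f).Adj S) p q →
        ∀ x y, f x = p → f y = q → EqvGen (G.Adj S ⊔ k) x y from
      fun h x y => this _ _ (h (f x) (f y)) x y rfl rfl
    intro p q hpq
    induction hpq with
    | rel p q hpq =>
      rintro x y rfl rfl
      obtain ⟨e, he, ⟨h₁, h₂⟩ | ⟨h₁, h₂⟩⟩ := hpq
      · refine ((hker _ _ h₁.symm).trans _ _ _ (.rel _ _ (.inl ⟨e, he, .inl ⟨rfl, rfl⟩⟩))).trans
          _ _ _ (hker _ _ h₂)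
      · refine ((hker _ _ h₂.symm).trans _ _ _ (.rel _ _ (.inl ⟨e, he, .inr ⟨rfl, rfl⟩⟩))).trans
          _ _ _ (hker _ _ h₁)
    | refl => exact fun x y hx hy => hker x y (hx.trans hy.symm)
    | symm _ _ _ ih => exact fun x y hx hy => .symm _ _ (ih y x hy hx)
    | trans _ q _ _ _ ih₁ ih₂ =>
      intro x y hx hy
      obtain ⟨z, rfl⟩ := hf q
      exact (ih₁ x z hx rfl).trans _ _ _ (ih₂ z y rfl hy)
  · intro h p q
    obtain ⟨x, rfl⟩ := hf p
    obtain ⟨y, rfl⟩ := hf q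
    refine EqvGen.map f ?_ (h x y)
    rintro x y (⟨e, he, ⟨rfl, rfl⟩ | ⟨rfl, rfl⟩⟩ | h)
    · exact .rel _ _ ⟨e, he, .inl ⟨rfl, rfl⟩⟩
    · exact .rel _ _ ⟨e, he, .inr ⟨rfl, rfl⟩⟩
    · rw [(hk x y).2 (.rel _ _ h)]
      exact .refl _

theorem identify_eq_map (a b : V) : G.identify a b = G.map (Quot.mk (pairRel a b)) :=
  rfl

theorem connOn_identify_iff {a b : V} :
    (G.identify a b).ConnOn S ↔ ∀ u v, EqvGen (G.Adj S ⊔ pairRel a b) u v := by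
  rw [identify_eq_map]
  exact connOn_map_iff Quot.mk_surjective fun _ _ => Quot.eq

end Quotients

section ParallelJoin

variable {V V' E E' : Type} {H : Multigraph V E} {s t : V} {H' : Multigraph V' E'} {s' t' : V'}
  {S : Set (E ⊕ E')} {u v : V} {u' v' : V'}

def sum (H : Multigraph V E) (H' : Multigraph V' E') : Multigraph (V ⊕ V') (E ⊕ E') :=
  ⟨Sum.map H.fst H'.fst, Sum.map H.snd H'.snd⟩

@[simp] theorem sum_adj_inl_inl :
    (H.sum H').Adj S (.inl u) (.inl v) ↔ H.Adj (Sum.inl ⁻¹' S) u v := by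
  simp [Adj, sum]

@[simp] theorem sum_adj_inr_inr :
    (H.sum H').Adj S (.inr u') (.inr v') ↔ H'.Adj (Sum.inr ⁻¹' S) u' v' := by
  simp [Adj, sum]

@[simp] theorem not_sum_adj_inl_inr : ¬ (H.sum H').Adj S (.inl u) (.inr v') := by
  simp [Adj, sum]

@[simp] theorem not_sum_adj_inr_inl : ¬ (H.sum H').Adj S (.inr u') (.inl v) := by
  simp [Adj, sum]

def glue (s t : V) (s' t' : V') : V ⊕ V' → V ⊕ V' → Prop :=
  pairRel (.inl s) (.inr s') ⊔ pairRel (.inl t) (.inr t')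

theorem parallelJoin_eq_map :
    parallelJoin H s t H' s' t' = (H.sum H').map (Quot.mk (glue s t s' t')) :=
  rfl

theorem connOn_parallelJoin_iff_eqvGen :
    (parallelJoin H s t H' s' t').ConnOn S ↔
      ∀ p q, EqvGen ((H.sum H').Adj S ⊔ glue s t s' t') p q := by
  rw [parallelJoin_eq_map]
  exact connOn_map_iff Quot.mk_surjective fun _ _ => Quot.eq

theorem connOn_identify_parallelJoin_iff_eqvGen :
    ((parallelJoin H s t H' s' t').identify (Quot.mk _ (.inl s)) (Quot.mk _ (.inl t))).ConnOn S ↔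
      ∀ p q, EqvGen ((H.sum H').Adj S ⊔ glue s t s' t' ⊔ pairRel (.inl s) (.inl t)) p q := by
  rw [sup_assoc]
  exact connOn_map_iff (G := H.sum H') (Quot.mk_surjective.comp Quot.mk_surjective)
    fun _ _ => Quot.mk_mk_eq_mk_mk_iff

/-- Collapsing all of `V'` onto `s` turns every step of the join into a step of `H / (s = t)`. -/
theorem eqvGen_of_eqvGen_inl
    (h : EqvGen ((H.sum H').Adj S ⊔ glue s t s' t' ⊔ pairRel (.inl s) (.inl t)) (.inl u) (.inl v)) :
    EqvGen (H.Adj (Sum.inl ⁻¹' S) ⊔ pairRel s t) u v := by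
  have hlink : EqvGen (H.Adj (Sum.inl ⁻¹' S) ⊔ pairRel s t) s t := .rel _ _ (.inr ⟨rfl, rfl⟩)
  refine EqvGen.map (Sum.elim id fun _ => s) ?_ h
  rintro (x | x) (y | y) ((hxy | ⟨hx, hy⟩ | ⟨hx, hy⟩) | ⟨hx, hy⟩) <;> simp_all
  all_goals first | exact .refl _ | exact hlink | exact .symm _ _ hlink | exact .rel _ _ (.inl ‹_›)

theorem eqvGen_of_eqvGen_inr
    (h : EqvGen ((H.sum H').Adj S ⊔ glue s t s' t' ⊔ pairRel (.inl s) (.inl t))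
      (.inr u') (.inr v')) :
    EqvGen (H'.Adj (Sum.inr ⁻¹' S) ⊔ pairRel s' t') u' v' := by
  have hlink : EqvGen (H'.Adj (Sum.inr ⁻¹' S) ⊔ pairRel s' t') s' t' := .rel _ _ (.inr ⟨rfl, rfl⟩)
  refine EqvGen.map (Sum.elim (fun _ => s') id) ?_ h
  rintro (x | x) (y | y) ((hxy | ⟨hx, hy⟩ | ⟨hx, hy⟩) | ⟨hx, hy⟩) <;> simp_all
  all_goals first | exact .refl _ | exact hlink | exact .symm _ _ hlink | exact .rel _ _ (.inl ‹_›)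

/-- Otherwise the vertices joined to `s` in `H` or to `s'` in `H'` would form a union of
components of the join containing `inl s` but not `inl t`. -/
theorem eqvGen_or_of_eqvGen_parallelJoin
    (h : EqvGen ((H.sum H').Adj S ⊔ glue s t s' t') (.inl s) (.inl t)) :
    EqvGen (H.Adj (Sum.inl ⁻¹' S)) s t ∨ EqvGen (H'.Adj (Sum.inr ⁻¹' S)) s' t' := by
  by_contra! ⟨hH, hH'⟩
  let c : V ⊕ V' → Prop :=
    Sum.elim (EqvGen (H.Adj (Sum.inl ⁻¹' S)) s) (EqvGen (H'.Adj (Sum.inr ⁻¹' S)) s')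
  have step : ∀ {α : Type} {r : α → α → Prop} {a x y : α}, r x y → (EqvGen r a x ↔ EqvGen r a y) :=
    fun h => ⟨fun hx => hx.trans _ _ _ (.rel _ _ h),
      fun hy => hy.trans _ _ _ (.symm _ _ (.rel _ _ h))⟩
  have hc : ∀ p q, ((H.sum H').Adj S ⊔ glue s t s' t') p q → c p = c q := by
    rintro (x | x) (y | y) (hxy | ⟨hx, hy⟩ | ⟨hx, hy⟩) <;> simp_all [c]
    exacts [step hxy, iff_of_true (.refl _) (.refl _), step hxy]
  exact hH (cast (congrArg (Quot.lift c hc) (Quot.eqvGen_sound h)) (.refl _))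

theorem eqvGen_of_forall_eqvGen {ρ : V ⊕ V' → V ⊕ V' → Prop} (hadj : (H.sum H').Adj S ≤ ρ)
    (hglue : glue s t s' t' ≤ ρ) (hlink : EqvGen ρ (.inl s) (.inl t))
    (hH : ∀ u v, EqvGen (H.Adj (Sum.inl ⁻¹' S) ⊔ pairRel s t) u v)
    (hH' : ∀ u v, EqvGen (H'.Adj (Sum.inr ⁻¹' S) ⊔ pairRel s' t') u v) (p q : V ⊕ V') :
    EqvGen ρ p q := by
  have hs : EqvGen ρ (.inl s) (.inr s') := .rel _ _ (hglue _ _ (.inl ⟨rfl, rfl⟩))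
  have ht : EqvGen ρ (.inl t) (.inr t') := .rel _ _ (hglue _ _ (.inr ⟨rfl, rfl⟩))
  have hinl : ∀ u, EqvGen ρ (.inl u) (.inl s) := by
    refine fun u => EqvGen.map Sum.inl ?_ (hH u s)
    rintro x y (hxy | ⟨rfl, rfl⟩)
    exacts [.rel _ _ (hadj _ _ (sum_adj_inl_inl.2 hxy)), hlink]
  have hinr : ∀ u', EqvGen ρ (.inr u') (.inl s) := by
    refine fun u' => (EqvGen.map Sum.inr ?_ (hH' u' s')).trans _ _ _ (.symm _ _ hs)
    rintro x y (hxy | ⟨rfl, rfl⟩)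
    · exact .rel _ _ (hadj _ _ (sum_adj_inr_inr.2 hxy))
    · exact ((EqvGen.symm _ _ hs).trans _ _ _ hlink).trans _ _ _ ht
  have hbase : ∀ p, EqvGen ρ p (.inl s) := fun p => p.rec hinl hinr
  exact (hbase p).trans _ _ _ (.symm _ _ (hbase q))

theorem connOn_parallelJoin_iff :
    (parallelJoin H s t H' s' t').ConnOn S ↔
      (H.ConnOn (Sum.inl ⁻¹' S) ∧ (H'.identify s' t').ConnOn (Sum.inr ⁻¹' S)) ∨
        ((H.identify s t).ConnOn (Sum.inl ⁻¹' S) ∧ H'.ConnOn (Sum.inr ⁻¹' S)) := by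
  rw [connOn_parallelJoin_iff_eqvGen, connOn_identify_iff, connOn_identify_iff, connOn_iff_eqvGen,
    connOn_iff_eqvGen]
  constructor
  · intro h
    have h₂ p q : EqvGen ((H.sum H').Adj S ⊔ glue s t s' t' ⊔ pairRel (.inl s) (.inl t)) p q :=
      EqvGen.mono le_sup_left _ _ (h p q)
    have hH u v := eqvGen_of_eqvGen_inl (h₂ (.inl u) (.inl v))
    have hH' u v := eqvGen_of_eqvGen_inr (h₂ (.inr u) (.inr v))
    rcases eqvGen_or_of_eqvGen_parallelJoin (h _ _) with hlink | hlink
    · exact .inl ⟨fun u v => EqvGen.of_sup_pairRel hlink (hH u v), hH'⟩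
    · exact .inr ⟨hH, fun u v => EqvGen.of_sup_pairRel hlink (hH' u v)⟩
  · have hadj : (H.sum H').Adj S ≤ (H.sum H').Adj S ⊔ glue s t s' t' := le_sup_left
    have hglue : glue s t s' t' ≤ (H.sum H').Adj S ⊔ glue s t s' t' := le_sup_right
    have hinl : ∀ {u v}, EqvGen (H.Adj (Sum.inl ⁻¹' S)) u v →
        EqvGen ((H.sum H').Adj S ⊔ glue s t s' t') (.inl u) (.inl v) :=
      EqvGen.map _ fun _ _ h => .rel _ _ (hadj _ _ (sum_adj_inl_inl.2 h))
    have hinr : ∀ {u v}, EqvGen (H'.Adj (Sum.inr ⁻¹' S)) u v →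
        EqvGen ((H.sum H').Adj S ⊔ glue s t s' t') (.inr u) (.inr v) :=
      EqvGen.map _ fun _ _ h => .rel _ _ (hadj _ _ (sum_adj_inr_inr.2 h))
    rintro (⟨hH, hH'⟩ | ⟨hH, hH'⟩)
    · exact eqvGen_of_forall_eqvGen hadj hglue (hinl (hH s t))
        (fun u v => EqvGen.mono le_sup_left _ _ (hH u v)) hH'
    · have hs : EqvGen ((H.sum H').Adj S ⊔ glue s t s' t') (.inl s) (.inr s') :=
        .rel _ _ (hglue _ _ (.inl ⟨rfl, rfl⟩))
      have ht : EqvGen ((H.sum H').Adj S ⊔ glue s t s' t') (.inl t) (.inr t') :=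
        .rel _ _ (hglue _ _ (.inr ⟨rfl, rfl⟩))
      exact eqvGen_of_forall_eqvGen hadj hglue
        ((hs.trans _ _ _ (hinr (hH' s' t'))).trans _ _ _ (.symm _ _ ht)) hH
        (fun u v => EqvGen.mono le_sup_left _ _ (hH' u v))

theorem connOn_identify_parallelJoin_iff :
    ((parallelJoin H s t H' s' t').identify (Quot.mk _ (.inl s)) (Quot.mk _ (.inl t))).ConnOn S ↔
      (H.identify s t).ConnOn (Sum.inl ⁻¹' S) ∧ (H'.identify s' t').ConnOn (Sum.inr ⁻¹' S) := by
  rw [connOn_identify_parallelJoin_iff_eqvGen, connOn_identify_iff, connOn_identify_iff]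
  refine ⟨fun h => ⟨fun _ _ => eqvGen_of_eqvGen_inl (h _ _), fun _ _ => eqvGen_of_eqvGen_inr (h _ _)⟩,
    fun ⟨hH, hH'⟩ => ?_⟩
  exact eqvGen_of_forall_eqvGen (le_sup_left.trans le_sup_left) (le_sup_right.trans le_sup_left)
    (.rel _ _ (.inr ⟨rfl, rfl⟩)) hH hH'

end ParallelJoin

section SpanningTrees

variable {V V' E E' : Type} [DecidableEq E] [DecidableEq E'] {G : Multigraph V E}

theorem isSpanningTree_iff_minimal {T : Finset E} :
    G.IsSpanningTree T ↔ Minimal (fun T : Finset E => G.ConnOn ↑T) T :=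
  (Finset.minimal_iff_forall_erase (P := fun T : Finset E => G.ConnOn ↑T)
    fun _ _ h hts => h.mono (Finset.coe_subset.2 hts)).symm

theorem eqvGen_adj_erase_of_eqvGen {T : Finset E} {e : E} {k : V → V → Prop} {x y : V}
    (he : EqvGen (G.Adj ↑(T.erase e) ⊔ k) (G.fst e) (G.snd e))
    (h : EqvGen (G.Adj ↑T ⊔ k) x y) : EqvGen (G.Adj ↑(T.erase e) ⊔ k) x y := by
  refine EqvGen.eqvGen_le (sup_le ?_ fun _ _ hk => .rel _ _ (.inr hk)) _ _ h
  rintro x y ⟨f, hf, hxy⟩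
  by_cases hfe : f = e
  · subst hfe
    rcases hxy with ⟨rfl, rfl⟩ | ⟨rfl, rfl⟩
    exacts [he, .symm _ _ he]
  · exact .rel _ _ (.inl ⟨f, by simpa [hfe] using hf, hxy⟩)

/-- Take a minimal `T₀ ⊆ T` joining `s` to `t` and an edge `e ∈ T₀`: in `T₀ \ {e}` the endpoints
of `e` are joined to `s` and `t` crosswise, so after identifying `s` with `t` the edge `e` is
redundant in `T`. -/
theorem not_connOn_of_minimal_connOn_identify {s t : V} (hst : s ≠ t) {T : Finset E}
    (hT : Minimal (fun T : Finset E => (G.identify s t).ConnOn ↑T) T) : ¬ G.ConnOn ↑T := by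
  intro hconn
  obtain ⟨T₀, hT₀T, hT₀⟩ := exists_minimal_le_of_wellFoundedLT
    (fun T₀ : Finset E => EqvGen (G.Adj ↑T₀) s t) T (connOn_iff_eqvGen.1 hconn s t)
  obtain ⟨e, he⟩ : T₀.Nonempty := by
    refine Finset.nonempty_iff_ne_empty.2 fun h => hst ?_
    subst h
    exact EqvGen.eqvGen_le (fun _ _ ⟨_, he, _⟩ => absurd he (Finset.notMem_empty _)) _ _ hT₀.prop
  have hcut : ¬ EqvGen (G.Adj ↑(T₀.erase e)) s t := hT₀.not_prop_of_lt (Finset.erase_ssubset he)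
  have hle : EqvGen (G.Adj ↑(T₀.erase e)) ≤ EqvGen (G.Adj ↑(T.erase e) ⊔ pairRel s t) :=
    EqvGen.mono fun _ _ ⟨f, hf, h⟩ =>
      .inl ⟨f, Finset.coe_subset.2 (Finset.erase_subset_erase e hT₀T) hf, h⟩
  have hlink : EqvGen (G.Adj ↑(T.erase e) ⊔ pairRel s t) s t := .rel _ _ (.inr ⟨rfl, rfl⟩)
  have hab : EqvGen (G.Adj ↑(T.erase e) ⊔ pairRel s t) (G.fst e) (G.snd e) := by
    have : EqvGen (G.Adj ↑(T₀.erase e) ⊔ pairRel (G.fst e) (G.snd e)) s t :=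
      eqvGen_adj_erase_of_eqvGen (.rel _ _ (.inr ⟨rfl, rfl⟩)) (EqvGen.mono le_sup_left _ _ hT₀.prop)
    rcases eqvGen_sup_pairRel_iff.1 this with h | ⟨h₁, h₂⟩ | ⟨h₁, h₂⟩
    · exact absurd h hcut
    · exact ((EqvGen.symm _ _ (hle _ _ h₁)).trans _ _ _ hlink).trans _ _ _
        (.symm _ _ (hle _ _ h₂))
    · exact ((hle _ _ h₂).trans _ _ _ (.symm _ _ hlink)).trans _ _ _ (hle _ _ h₁)
  refine hT.not_prop_of_lt (Finset.erase_ssubset (hT₀T he)) (connOn_identify_iff.2 fun u v => ?_)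
  exact eqvGen_adj_erase_of_eqvGen hab (connOn_identify_iff.1 hT.prop u v)

theorem not_isSpanningTree_and_isSpanningTree_identify {s t : V} (hst : s ≠ t) {T : Finset E} :
    ¬ (G.IsSpanningTree T ∧ (G.identify s t).IsSpanningTree T) := fun ⟨h, h'⟩ =>
  not_connOn_of_minimal_connOn_identify hst (isSpanningTree_iff_minimal.1 h') h.1

variable {H : Multigraph V E} {s t : V} {H' : Multigraph V' E'} {s' t' : V'}
  {T : Finset (E ⊕ E')}

theorem isSpanningTree_parallelJoin_iff (hst : s ≠ t) (hst' : s' ≠ t') :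
    (parallelJoin H s t H' s' t').IsSpanningTree T ↔
      (H.IsSpanningTree T.toLeft ∧ (H'.identify s' t').IsSpanningTree T.toRight) ∨
        ((H.identify s t).IsSpanningTree T.toLeft ∧ H'.IsSpanningTree T.toRight) := by
  simp only [isSpanningTree_iff_minimal, ← Finset.minimal_toLeft_and_toRight_iff,
    connOn_parallelJoin_iff, ← Finset.coe_toLeft, ← Finset.coe_toRight]
  refine minimal_or_iff ?_ ?_
  · rintro x y hx hyx ⟨-, hy⟩
    have := Finset.minimal_toLeft_and_toRight_iff (P := fun T : Finset E => H.ConnOn ↑T)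
      (Q := fun T : Finset E' => (H'.identify s' t').ConnOn ↑T) |>.1 hx
    exact not_connOn_of_minimal_connOn_identify hst' this.2
      (hy.mono (Finset.coe_subset.2 (Finset.toRight_subset_toRight hyx)))
  · rintro x y hx hyx ⟨hy, -⟩
    have := Finset.minimal_toLeft_and_toRight_iff
      (P := fun T : Finset E => (H.identify s t).ConnOn ↑T) (Q := fun T : Finset E' => H'.ConnOn ↑T)
      |>.1 hx
    exact not_connOn_of_minimal_connOn_identify hst this.1
      (hy.mono (Finset.coe_subset.2 (Finset.toLeft_subset_toLeft hyx)))

theorem isSpanningTree_identify_parallelJoin_iff :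
    ((parallelJoin H s t H' s' t').identify (Quot.mk _ (.inl s)) (Quot.mk _ (.inl t))).IsSpanningTree
        T ↔
      (H.identify s t).IsSpanningTree T.toLeft ∧ (H'.identify s' t').IsSpanningTree T.toRight := by
  simp only [isSpanningTree_iff_minimal, connOn_identify_parallelJoin_iff, ← Finset.coe_toLeft,
    ← Finset.coe_toRight]
  exact Finset.minimal_toLeft_and_toRight_iff (P := fun T : Finset E => (H.identify s t).ConnOn ↑T)
    (Q := fun T : Finset E' => (H'.identify s' t').ConnOn ↑T)

end SpanningTrees

section KirchhoffSum

open MvPolynomial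

variable {V E E' : Type} [Fintype E] [DecidableEq E] [Fintype E'] [DecidableEq E']

open Classical in
noncomputable def kirchhoffSum (P : Finset E → Prop) : MvPolynomial E ℚ :=
  ∑ T : Finset E, if P T then ∏ e ∈ Tᶜ, X e else 0

theorem kirchhoff_eq_kirchhoffSum {G : Multigraph V E} {P : Finset E → Prop}
    (h : ∀ T, G.IsSpanningTree T ↔ P T) : G.kirchhoff = kirchhoffSum P :=
  congrArg kirchhoffSum (funext fun T => propext (h T))

theorem kirchhoffSum_or {P Q : Finset E → Prop} (h : ∀ T, ¬ (P T ∧ Q T)) :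
    kirchhoffSum (fun T => P T ∨ Q T) = kirchhoffSum P + kirchhoffSum Q := by
  simp only [kirchhoffSum, ← Finset.sum_add_distrib]
  refine Finset.sum_congr rfl fun T _ => ?_
  by_cases hP : P T <;> by_cases hQ : Q T <;> simp [hP, hQ]
  exact (h T ⟨hP, hQ⟩).elim

theorem kirchhoffSum_toLeft_and_toRight {P : Finset E → Prop} {Q : Finset E' → Prop} :
    kirchhoffSum (fun T : Finset (E ⊕ E') => P T.toLeft ∧ Q T.toRight) =
      rename Sum.inl (kirchhoffSum P) * rename Sum.inr (kirchhoffSum Q) := by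
  classical
  simp only [kirchhoffSum, map_sum, Finset.sum_mul_sum, ← Fintype.sum_prod_type']
  refine Fintype.sum_equiv Finset.sumEquiv.toEquiv _ _ fun T => ?_
  have hcompl : Tᶜ = T.toLeftᶜ.disjSum T.toRightᶜ := by ext (e | e) <;> simp
  change _ = rename _ (if P T.toLeft then ∏ e ∈ T.toLeftᶜ, X e else 0) *
    rename _ (if Q T.toRight then ∏ e ∈ T.toRightᶜ, X e else 0)
  rw [hcompl, Finset.prod_disjSum]
  by_cases hP : P T.toLeft <;> by_cases hQ : Q T.toRight <;> simp [hP, hQ, map_prod]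

end KirchhoffSum

end Multigraph

open Multigraph MvPolynomial in
/-- For the parallel join `G = H ⋆ H'` of source-terminal graphs with disjoint
edge sets: `Ψ_G = Ψ_H·Φ_{H'} + Φ_H·Ψ_{H'}` and `Φ_G = Φ_H·Φ_{H'}`. -/
theorem kirchhoff_parallelJoin {V E V' E' : Type}
    [Fintype E] [DecidableEq E] [Fintype E'] [DecidableEq E']
    (H : Multigraph V E) (s t : V) (hst : s ≠ t)
    (H' : Multigraph V' E') (s' t' : V') (hst' : s' ≠ t') :
    (parallelJoin H s t H' s' t').kirchhoff =
        rename (Sum.inl : E → E ⊕ E') H.kirchhoff *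
            rename (Sum.inr : E' → E ⊕ E') (H'.breaker s' t')
          + rename (Sum.inl : E → E ⊕ E') (H.breaker s t) *
            rename (Sum.inr : E' → E ⊕ E') H'.kirchhoff ∧
      (parallelJoin H s t H' s' t').breaker
          (Quot.mk _ (Sum.inl s)) (Quot.mk _ (Sum.inl t)) =
        rename (Sum.inl : E → E ⊕ E') (H.breaker s t) *
          rename (Sum.inr : E' → E ⊕ E') (H'.breaker s' t') := by
  have hdisjoint : ∀ T : Finset (E ⊕ E'),
      ¬ ((H.IsSpanningTree T.toLeft ∧ (H'.identify s' t').IsSpanningTree T.toRight) ∧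
        ((H.identify s t).IsSpanningTree T.toLeft ∧ H'.IsSpanningTree T.toRight)) :=
    fun _ ⟨⟨h, _⟩, ⟨h', _⟩⟩ => not_isSpanningTree_and_isSpanningTree_identify hst ⟨h, h'⟩
  constructor
  · rw [kirchhoff_eq_kirchhoffSum fun _ => isSpanningTree_parallelJoin_iff hst hst',
      kirchhoffSum_or hdisjoint, kirchhoffSum_toLeft_and_toRight, kirchhoffSum_toLeft_and_toRight]
    rfl
  · rw [breaker, kirchhoff_eq_kirchhoffSum fun _ => isSpanningTree_identify_parallelJoin_iff,
      kirchhoffSum_toLeft_and_toRight]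
    rfl
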